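/- Renaming lemma for closed terms-in-context: let ∇ ⊢ l be a term-in-context with atoms a1,...,an and unknowns X1,...,Xn, and let ∇' ⊢ l' be a freshened variant with corresponding fresh atoms a1',...,an' and unknowns X1',...,Xn'. Define the permutation τ = (a1' a1)∘...∘(an' an) and the substitution ς = [X1 ↦ τ·X1', ..., Xn ↦ τ·Xn']. Then (1) l' ≡ τ·(lς), and (2) for any context Γ' and substitution θ: Γ' ⊢ ∇'θ if and only if Γ' ⊢ (∇ς)θ. -/

import Mathlib

/-! Nominal terms: atoms, permutations, terms, actions, freshness, α-equivalence,
nominal rewriting and nominal algebra, closed rewriting. -/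

abbrev Atom := ℕ
abbrev Unknown := ℕ

/-- Finitely supported permutations of atoms. -/
def FinPerm := {π : Equiv.Perm Atom // {a | π a ≠ a}.Finite}

namespace FinPerm

instance : CoeFun FinPerm (fun _ => Atom → Atom) := ⟨fun π => π.1⟩

def id : FinPerm := ⟨Equiv.refl Atom, by simp⟩

/-- `comp π π'` is `π ∘ π'` (first apply `π'`, then `π`). -/
def comp (π π' : FinPerm) : FinPerm :=
  ⟨π'.1.trans π.1, ((π.2.union π'.2).subset (by
    intro a ha
    simp only [Set.mem_setOf_eq, Equiv.trans_apply] at ha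
    by_cases h : π'.1 a = a
    · exact Or.inl (by simpa [h] using ha)
    · exact Or.inr h))⟩

def inv (π : FinPerm) : FinPerm :=
  ⟨π.1.symm, π.2.subset (by
    intro a ha h
    exact ha (π.1.symm_apply_eq.mpr h.symm))⟩

def swap (a b : Atom) : FinPerm :=
  ⟨Equiv.swap a b, (Set.toFinite {a, b}).subset (by
    intro c hc
    by_contra h
    simp only [Set.mem_insert_iff, Set.mem_singleton_iff, not_or] at h
    exact hc (Equiv.swap_apply_of_ne_of_ne h.1 h.2))⟩

/-- The (finite) set of atoms moved by `π`. -/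
noncomputable def nontriv (π : FinPerm) : Finset Atom := π.2.toFinset

end FinPerm

/-- Nominal terms: atoms, moderated unknowns `π·X`, abstractions `[a]t`,
and term-formers applied to lists of arguments. -/
inductive Term : Type where
  | atom : Atom → Term
  | var  : FinPerm → Unknown → Term
  | abs  : Atom → Term → Term
  | app  : ℕ → List Term → Term

/-- Permutation action on terms. -/
def permAct (π : FinPerm) : Term → Term
  | .atom a => .atom (π a)
  | .var π' X => .var (π.comp π') X
  | .abs a t => .abs (π a) (permAct π t)
  | .app f ts => .app f (ts.attach.map fun t => permAct π t.1)
decreasing_by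
  all_goals simp_wf
  have := List.sizeOf_lt_of_mem t.2
  omega

/-- Substitutions, represented as total maps (the default value of `X` is `id·X`). -/
def Subst := Unknown → Term

/-- A substitution has finite domain. -/
def Subst.FinDom (σ : Subst) : Prop := {X | σ X ≠ .var FinPerm.id X}.Finite

/-- Substitution action on terms. -/
def subst (σ : Subst) : Term → Term
  | .atom a => .atom a
  | .var π X => permAct π (σ X)
  | .abs a t => .abs a (subst σ t)
  | .app f ts => .app f (ts.attach.map fun t => subst σ t.1)
decreasing_by
  all_goals simp_wf
  have := List.sizeOf_lt_of_mem t.2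
  omega

/-- Composition of substitutions: `(σ.comp θ) X = (Xσ)θ`. -/
def Subst.comp (σ θ : Subst) : Subst := fun X => subst θ (σ X)

/-- `σ∘π`, mapping `X` to `π·(σ X)`. -/
def Subst.permComp (σ : Subst) (π : FinPerm) : Subst := fun X => permAct π (σ X)

mutual
/-- Atoms occurring in a term. -/
noncomputable def atmsF : Term → Finset Atom
  | .atom a => {a}
  | .var π _ => π.nontriv
  | .abs a t => insert a (atmsF t)
  | .app _ ts => atmsLF ts
noncomputable def atmsLF : List Term → Finset Atom
  | [] => ∅
  | t :: ts => atmsF t ∪ atmsLF ts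
end

mutual
/-- Unknowns occurring in a term. -/
def unknF : Term → Finset Unknown
  | .atom _ => ∅
  | .var _ X => {X}
  | .abs _ t => unknF t
  | .app _ ts => unknLF ts
def unknLF : List Term → Finset Unknown
  | [] => ∅
  | t :: ts => unknF t ∪ unknLF ts
end

/-- Freshness contexts: finite sets of primitive constraints `a#X`. -/
abbrev Ctx := Finset (Atom × Unknown)

def ctxAtoms (Δ : Ctx) : Finset Atom := Δ.image Prod.fst
def ctxUnkns (Δ : Ctx) : Finset Unknown := Δ.image Prod.snd

/-- Derivable freshness judgements `Δ ⊢ a # t`. -/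
inductive Fresh (Δ : Ctx) : Atom → Term → Prop where
  | atom {a b} : a ≠ b → Fresh Δ a (.atom b)
  | var {a π X} : (π.inv a, X) ∈ Δ → Fresh Δ a (.var π X)
  | absSame {a t} : Fresh Δ a (.abs a t)
  | absDiff {a b t} : a ≠ b → Fresh Δ a t → Fresh Δ a (.abs b t)
  | app {a f ts} : (∀ t ∈ ts, Fresh Δ a t) → Fresh Δ a (.app f ts)

/-- Derivable α-equivalence judgements `Δ ⊢ s ≈α t`. -/
inductive Aeq (Δ : Ctx) : Term → Term → Prop where
  | atom {a} : Aeq Δ (.atom a) (.atom a)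
  | var {π π' : FinPerm} {X : Unknown} : (∀ a : Atom, (π : Atom → Atom) a ≠ (π' : Atom → Atom) a → (a, X) ∈ Δ) →
      Aeq Δ (.var π X) (.var π' X)
  | absSame {a t u} : Aeq Δ t u → Aeq Δ (.abs a t) (.abs a u)
  | absDiff {a b t u} : a ≠ b → Fresh Δ b t → Aeq Δ (permAct (FinPerm.swap b a) t) u →
      Aeq Δ (.abs a t) (.abs b u)
  | app {f ts us} : ts.length = us.length → (∀ p ∈ ts.zip us, Aeq Δ p.1 p.2) →
      Aeq Δ (.app f ts) (.app f us)

/-- Subterm relation. -/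
inductive Subterm : Term → Term → Prop where
  | refl (t) : Subterm t t
  | abs {s t a} : Subterm s t → Subterm s (.abs a t)
  | app {s t f ts} : t ∈ ts → Subterm s t → Subterm s (.app f ts)

mutual
/-- Number of occurrences of the unknown `X` in a term. -/
def countUnk (X : Unknown) : Term → ℕ
  | .atom _ => 0
  | .var _ Y => if Y = X then 1 else 0
  | .abs _ t => countUnk X t
  | .app _ ts => countUnkL X ts
def countUnkL (X : Unknown) : List Term → ℕ
  | [] => 0
  | t :: ts => countUnk X t + countUnkL X ts
end

/-- A position: a term with a distinguished unknown occurring exactly once, as `id·X`. -/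
structure Position where
  ctx : Term
  hole : Unknown
  once : countUnk hole ctx = 1
  idOnly : ∀ π : FinPerm, Subterm (.var π hole) ctx → π = FinPerm.id

def fillAux (X : Unknown) (u : Term) : Term → Term
  | .atom a => .atom a
  | .var π Y => if Y = X then u else .var π Y
  | .abs a t => .abs a (fillAux X u t)
  | .app f ts => .app f (ts.attach.map fun t => fillAux X u t.1)
decreasing_by
  all_goals simp_wf
  have := List.sizeOf_lt_of_mem t.2
  omega

/-- `C[u]`: place `u` in the hole of the position `C`. -/
def Position.fill (C : Position) (u : Term) : Term := fillAux C.hole u C.ctx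

/-- A rule `∇ ⊢ l → r` (also used for axioms `∇ ⊢ l = r`). -/
structure Rule where
  ctx : Ctx
  lhs : Term
  rhs : Term

noncomputable def Rule.atms (R : Rule) : Finset Atom := ctxAtoms R.ctx ∪ atmsF R.lhs ∪ atmsF R.rhs
def Rule.unkn (R : Rule) : Finset Unknown := ctxUnkns R.ctx ∪ unknF R.lhs ∪ unknF R.rhs

/-- `Δ ⊢ ∇θ`: every constraint of `∇`, instantiated by `θ`, is derivable from `Δ`. -/
def FreshSubst (Δ N : Ctx) (θ : Subst) : Prop :=
  ∀ p ∈ N, Fresh Δ p.1 (subst θ (.var FinPerm.id p.2))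

/-- One-step nominal rewriting with the rule `R` in context `Δ`. -/
def OneStepR (R : Rule) (Δ : Ctx) (s t : Term) : Prop :=
  ∃ (C : Position) (s' : Term) (π : FinPerm) (θ : Subst),
    s = C.fill s' ∧ FreshSubst Δ R.ctx θ ∧
    Aeq Δ s' (permAct π (subst θ R.lhs)) ∧
    Aeq Δ (C.fill (permAct π (subst θ R.rhs))) t

def OneStep (Rw : Set Rule) (Δ : Ctx) (s t : Term) : Prop := ∃ R ∈ Rw, OneStepR R Δ s t

/-- `Δ ⊢_R s ↔* t`: the reflexive-symmetric-transitive closure, including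
α-equivalence, of one-step rewriting. -/
inductive RewEq (Rw : Set Rule) (Δ : Ctx) : Term → Term → Prop where
  | step {s t} : OneStep Rw Δ s t → RewEq Rw Δ s t
  | alpha {s t} : Aeq Δ s t → RewEq Rw Δ s t
  | symm {s t} : RewEq Rw Δ s t → RewEq Rw Δ t s
  | trans {s t u} : RewEq Rw Δ s t → RewEq Rw Δ t u → RewEq Rw Δ s u

/-- Atoms of a judgement `(Δ, s, t)`. -/
noncomputable def judgeAtms (Δ : Ctx) (s t : Term) : Finset Atom := ctxAtoms Δ ∪ atmsF s ∪ atmsF t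

def judgeUnkn (Δ : Ctx) (s t : Term) : Finset Unknown := ctxUnkns Δ ∪ unknF s ∪ unknF t

/-- `Γ` is a fresh context for a set of atoms `A`: its atoms avoid `A`. -/
def FreshFor (Γ : Ctx) (A : Finset Atom) : Prop := ∀ p ∈ Γ, p.1 ∉ A

/-- Nominal algebra equality `Δ ⊢_T s = t`. -/
inductive AlgEq (T : Set Rule) (Δ : Ctx) : Term → Term → Prop where
  | axm {s t} (R : Rule) (hR : R ∈ T) (Γ : Ctx) (C : Position) (π : FinPerm) (θ : Subst) :
      FreshFor Γ (judgeAtms Δ s t) →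
      FreshSubst (Δ ∪ Γ) R.ctx θ →
      Aeq (Δ ∪ Γ) s (C.fill (permAct π (subst θ R.lhs))) →
      Aeq (Δ ∪ Γ) (C.fill (permAct π (subst θ R.rhs))) t →
      AlgEq T Δ s t
  | refl (s) : AlgEq T Δ s s
  | symm {s t} : AlgEq T Δ s t → AlgEq T Δ t s
  | trans {s t u} : AlgEq T Δ s t → AlgEq T Δ t u → AlgEq T Δ s u

/-- `Rw` is a presentation of the equational theory `T`. -/
def Presents (Rw : Set Rule) (T : Set Rule) : Prop :=
  ∀ R : Rule, R ∈ T ↔ (R ∈ Rw ∨ Rule.mk R.ctx R.rhs R.lhs ∈ Rw)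

/-- Structural renaming of atoms (by a permutation `τ`) and unknowns (by `ρ`). -/
def renameT (τ : FinPerm) (ρ : Unknown → Unknown) : Term → Term
  | .atom a => .atom (τ a)
  | .var π X => .var (τ.comp (π.comp τ.inv)) (ρ X)
  | .abs a t => .abs (τ a) (renameT τ ρ t)
  | .app f ts => .app f (ts.attach.map fun t => renameT τ ρ t.1)
decreasing_by
  all_goals simp_wf
  have := List.sizeOf_lt_of_mem t.2
  omega

def renameCtx (τ : FinPerm) (ρ : Unknown → Unknown) (Δ : Ctx) : Ctx :=
  Δ.image (fun p => (τ p.1, ρ p.2))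

def Rule.rename (τ : FinPerm) (ρ : Unknown → Unknown) (R : Rule) : Rule :=
  ⟨renameCtx τ ρ R.ctx, renameT τ ρ R.lhs, renameT τ ρ R.rhs⟩

/-- `R'` is a freshened variant of `R`, avoiding also the atoms `A` and unknowns `U`. -/
def FreshenedVariant (A : Finset Atom) (U : Finset Unknown) (R R' : Rule) : Prop :=
  ∃ (τ : FinPerm) (ρ : Equiv.Perm Unknown),
    R' = R.rename τ ρ ∧
    (∀ a ∈ R.atms, τ a ∉ A ∪ R.atms) ∧
    (∀ X ∈ R.unkn, (ρ X) ∉ U ∪ R.unkn)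

/-- A rule (or axiom) `∇ ⊢ l → r` is closed: a freshened variant of `∇ ⊢ (l,r)` matches
`∇ ⊢ (l,r)` in the context `∇` extended with `atms(R') # unkn(R)`. -/
def Rule.Closed (R : Rule) : Prop :=
  ∃ R' : Rule, FreshenedVariant ∅ ∅ R R' ∧
    ∃ σ : Subst, (∀ X, X ∉ R'.unkn → σ X = .var FinPerm.id X) ∧
      FreshSubst (R.ctx ∪ R'.atms ×ˢ R.unkn) R'.ctx σ ∧
      Aeq (R.ctx ∪ R'.atms ×ˢ R.unkn) (subst σ R'.lhs) R.lhs ∧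
      Aeq (R.ctx ∪ R'.atms ×ˢ R.unkn) (subst σ R'.rhs) R.rhs

/-- One-step closed rewriting `Δ ⊢ s →c_R t`. -/
def ClosedStepR (R : Rule) (Δ : Ctx) (s t : Term) : Prop :=
  ∃ R' : Rule, FreshenedVariant (judgeAtms Δ s t ∪ R.atms) (judgeUnkn Δ s t ∪ R.unkn) R R' ∧
    ∃ (C : Position) (s' : Term) (θ : Subst),
      s = C.fill s' ∧
      FreshSubst (Δ ∪ R'.atms ×ˢ judgeUnkn Δ s t) R'.ctx θ ∧
      Aeq (Δ ∪ R'.atms ×ˢ judgeUnkn Δ s t) s' (subst θ R'.lhs) ∧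
      Aeq (Δ ∪ R'.atms ×ˢ judgeUnkn Δ s t) (C.fill (subst θ R'.rhs)) t

def ClosedStep (Rw : Set Rule) (Δ : Ctx) (s t : Term) : Prop := ∃ R ∈ Rw, ClosedStepR R Δ s t

/-- `Δ ⊢_R s ↔c* t`: reflexive-symmetric-transitive closure, including α-equivalence,
of one-step closed rewriting. -/
inductive ClosedRewEq (Rw : Set Rule) (Δ : Ctx) : Term → Term → Prop where
  | step {s t} : ClosedStep Rw Δ s t → ClosedRewEq Rw Δ s t
  | alpha {s t} : Aeq Δ s t → ClosedRewEq Rw Δ s t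
  | symm {s t} : ClosedRewEq Rw Δ s t → ClosedRewEq Rw Δ t s
  | trans {s t u} : ClosedRewEq Rw Δ s t → ClosedRewEq Rw Δ t u → ClosedRewEq Rw Δ s u


/-- The permutation `(a₁' a₁)∘…∘(aₙ' aₙ)` given by a list of pairs of atoms. -/
def swapsPerm : List (Atom × Atom) → FinPerm
  | [] => FinPerm.id
  | p :: l => (FinPerm.swap p.1 p.2).comp (swapsPerm l)

/-- The substitution `[X₁ ↦ τ·X₁', …, Xₙ ↦ τ·Xₙ']` given by a list of pairs of unknowns. -/
def listSubst (τ : FinPerm) (l : List (Unknown × Unknown)) : Subst := fun X =>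
  match l.find? (fun p => p.1 == X) with
  | some p => .var τ p.2
  | none => .var FinPerm.id X

/-- The unknown-renaming `[X₁ ↦ X₁', …, Xₙ ↦ Xₙ']`. -/
def listRen (l : List (Unknown × Unknown)) : Unknown → Unknown := fun X =>
  match l.find? (fun p => p.1 == X) with
  | some p => p.2
  | none => X
/-! The permutation `τ` is a product of swaps of pairwise distinct atoms, hence an involution,
so `τ⁻¹ = τ`. Renaming `π·X` to `(τ ∘ π ∘ τ⁻¹)·X'` is then exactly `τ·((π·X)ς) = τ·(π·(τ·X'))`,
which gives (1) by structural induction; (2) is equivariance of freshness: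
`τ a # t` iff `a # τ⁻¹·t = τ·t`. -/

@[induction_eliminator]
theorem Term.induction {motive : Term → Prop}
    (atom : ∀ a, motive (.atom a))
    (var : ∀ π X, motive (.var π X))
    (abs : ∀ a t, motive t → motive (.abs a t))
    (app : ∀ f ts, (∀ t ∈ ts, motive t) → motive (.app f ts)) :
    ∀ t, motive t
  | .atom a => atom a
  | .var π X => var π X
  | .abs a t => abs a t (Term.induction atom var abs app t)
  | .app f ts => app f ts fun t _ => Term.induction atom var abs app t
decreasing_by
  all_goals simp_wf
  all_goals first
    | omega
    | (have := List.sizeOf_lt_of_mem ‹t ∈ ts›; omega)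

namespace FinPerm

@[ext]
theorem ext {π π' : FinPerm} (h : ∀ a, π a = π' a) : π = π' :=
  Subtype.ext (Equiv.ext h)

@[simp]
theorem id_comp (π : FinPerm) : id.comp π = π :=
  ext fun _ => rfl

theorem comp_assoc (π₁ π₂ π₃ : FinPerm) : (π₁.comp π₂).comp π₃ = π₁.comp (π₂.comp π₃) :=
  ext fun _ => rfl

theorem comp_inv (π : FinPerm) : π.comp π.inv = id :=
  ext fun a => π.1.apply_symm_apply a

theorem inv_apply_apply (π : FinPerm) (a : Atom) : π.inv (π a) = a :=
  π.1.symm_apply_apply a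

theorem inv_comp_apply (π π' : FinPerm) (a : Atom) :
    (π.comp π').inv (π a) = π'.inv a :=
  congrArg π'.1.symm (π.1.symm_apply_apply a)

theorem inv_eq_self_of_mul_self {π : FinPerm} (h : π.1 * π.1 = 1) : π.inv = π :=
  Subtype.ext (inv_eq_of_mul_eq_one_left h)

end FinPerm

@[simp]
theorem permAct_app (π : FinPerm) (f : ℕ) (ts : List Term) :
    permAct π (.app f ts) = .app f (ts.map (permAct π)) := by
  rw [permAct]; simp

@[simp]
theorem subst_var (σ : Subst) (π : FinPerm) (X : Unknown) :
    subst σ (.var π X) = permAct π (σ X) := by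
  rw [subst]

@[simp]
theorem subst_app (σ : Subst) (f : ℕ) (ts : List Term) :
    subst σ (.app f ts) = .app f (ts.map (subst σ)) := by
  rw [subst]; simp

@[simp]
theorem renameT_app (τ : FinPerm) (ρ : Unknown → Unknown) (f : ℕ) (ts : List Term) :
    renameT τ ρ (.app f ts) = .app f (ts.map (renameT τ ρ)) := by
  rw [renameT]; simp

@[simp]
theorem permAct_id (t : Term) : permAct FinPerm.id t = t := by
  induction t with
  | atom a => rw [permAct]; rfl
  | var π X => simp only [permAct, FinPerm.id_comp]
  | abs a t ih => rw [permAct, ih]; rfl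
  | app f ts ih => simpa using List.map_congr_left ih

theorem permAct_comp (π π' : FinPerm) (t : Term) :
    permAct (π.comp π') t = permAct π (permAct π' t) := by
  induction t with
  | atom a => simp only [permAct]; rfl
  | var π'' X => simp only [permAct, FinPerm.comp_assoc]
  | abs a t ih => simp only [permAct, ih]; rfl
  | app f ts ih => simpa using List.map_congr_left ih

theorem Fresh.perm {Δ : Ctx} {a : Atom} {t : Term} (π : FinPerm) (h : Fresh Δ a t) :
    Fresh Δ (π a) (permAct π t) := by
  induction h with
  | atom hab => rw [permAct]; exact .atom (π.1.injective.ne hab)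
  | var hmem => rw [permAct]; exact .var (by rwa [FinPerm.inv_comp_apply])
  | absSame => rw [permAct]; exact .absSame
  | absDiff hab _ ih => rw [permAct]; exact .absDiff (π.1.injective.ne hab) ih
  | app _ ih =>
    rw [permAct_app]
    exact .app fun u hu => by
      obtain ⟨t, ht, rfl⟩ := List.mem_map.1 hu
      exact ih t ht

theorem fresh_apply_iff_fresh_permAct_inv {Δ : Ctx} {a : Atom} {t : Term} (π : FinPerm) :
    Fresh Δ (π a) t ↔ Fresh Δ a (permAct π.inv t) := by
  constructor
  · intro h
    simpa only [FinPerm.inv_apply_apply] using h.perm π.inv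
  · intro h
    simpa only [← permAct_comp, FinPerm.comp_inv, permAct_id] using h.perm π

theorem unknF_subset_unknLF {t : Term} {ts : List Term} (ht : t ∈ ts) :
    unknF t ⊆ unknLF ts := by
  induction ts with
  | nil => simp at ht
  | cons u us ih =>
    rw [unknLF]
    rcases List.mem_cons.1 ht with rfl | ht
    · exact Finset.subset_union_left
    · exact (ih ht).trans Finset.subset_union_right

theorem renameT_eq_permAct_subst {τ : FinPerm} (hτ : τ.inv = τ) {ρ : Unknown → Unknown}
    {ς : Subst} {t : Term} (hς : ∀ X ∈ unknF t, ς X = .var τ (ρ X)) :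
    renameT τ ρ t = permAct τ (subst ς t) := by
  induction t with
  | atom a => simp only [renameT, subst, permAct]
  | var π X =>
    rw [renameT, subst_var, hς X (Finset.mem_singleton_self X)]
    simp only [permAct, hτ]
  | abs a t ih => simp only [renameT, subst, permAct, ih hς]
  | app f ts ih =>
    simp only [renameT_app, subst_app, permAct_app, List.map_map]
    exact congrArg _ (List.map_congr_left fun t ht =>
      ih t ht fun X hX => hς X (unknF_subset_unknLF ht hX))

theorem swapsPerm_apply_of_forall_ne {l : List (Atom × Atom)} {c : Atom}
    (h : ∀ p ∈ l, c ≠ p.1 ∧ c ≠ p.2) : swapsPerm l c = c := by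
  induction l with
  | nil => rfl
  | cons p l ih =>
    obtain ⟨h₁, h₂⟩ := h p List.mem_cons_self
    show Equiv.swap p.1 p.2 (swapsPerm l c) = c
    rw [ih fun q hq => h q (List.mem_cons_of_mem p hq), Equiv.swap_apply_of_ne_of_ne h₁ h₂]

theorem swapsPerm_zip_apply_of_not_mem {xs ys : List Atom} {c : Atom} (hx : c ∉ xs)
    (hy : c ∉ ys) : swapsPerm (xs.zip ys) c = c :=
  swapsPerm_apply_of_forall_ne fun _ hp =>
    ⟨(ne_of_mem_of_not_mem (List.of_mem_zip hp).1 hx).symm,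
      (ne_of_mem_of_not_mem (List.of_mem_zip hp).2 hy).symm⟩

theorem swapsPerm_zip_mul_self {as as' : List Atom} (hnd : (as ++ as').Nodup) :
    (swapsPerm (as'.zip as)).1 * (swapsPerm (as'.zip as)).1 = 1 := by
  induction as' generalizing as with
  | nil => rfl
  | cons a' as' ih =>
    cases as with
    | nil => rfl
    | cons a as =>
      rw [List.cons_append, List.nodup_cons, List.nodup_middle, List.nodup_cons] at hnd
      obtain ⟨ha, ha', hnd⟩ := hnd
      simp only [List.mem_append, List.mem_cons, not_or] at ha ha'
      set σ := (swapsPerm (as'.zip as)).1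
      have hcomm : σ * Equiv.swap a' a = Equiv.swap a' a * σ := by
        rw [Equiv.mul_swap_eq_swap_mul, swapsPerm_zip_apply_of_not_mem ha'.2 ha'.1,
          swapsPerm_zip_apply_of_not_mem ha.2.2 ha.1]
      calc Equiv.swap a' a * σ * (Equiv.swap a' a * σ)
          = Equiv.swap a' a * (σ * Equiv.swap a' a) * σ := by simp only [mul_assoc]
        _ = σ * σ := by rw [hcomm, Equiv.swap_mul_self_mul]
        _ = 1 := ih hnd

theorem listSubst_of_mem_map_fst (τ : FinPerm) {l : List (Unknown × Unknown)} {X : Unknown}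
    (hX : X ∈ l.map Prod.fst) : listSubst τ l X = .var τ (listRen l X) := by
  obtain ⟨p, hp, rfl⟩ := List.mem_map.1 hX
  have hfound : (l.find? fun q => q.1 == p.1).isSome :=
    List.find?_isSome.2 ⟨p, hp, beq_self_eq_true p.1⟩
  obtain ⟨q, hq⟩ := Option.isSome_iff_exists.1 hfound
  simp only [listSubst, listRen, hq]

/-- Renaming lemma for terms-in-context: if `∇' ⊢ l'` is the freshened variant of `∇ ⊢ l`
obtained by renaming the atoms `as` to fresh atoms `as'` and the unknowns `Xs` to fresh
unknowns `Xs'`, then with `τ = (a₁' a₁)∘…∘(aₙ' aₙ)` and `ς = [Xᵢ ↦ τ·Xᵢ']`: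
(1) `l' = τ·(lς)`, and (2) `Γ' ⊢ ∇'θ` iff `Γ' ⊢ (∇ς)θ` for all `Γ'` and `θ`. -/
theorem renaming_lemma_closed (N : Ctx) (l : Term)
    (as as' : List Atom) (Xs Xs' : List Unknown)
    (hlen : as.length = as'.length) (hlenX : Xs.length = Xs'.length)
    (hnd : (as ++ as').Nodup) (hndX : (Xs ++ Xs').Nodup)
    (hatms : ctxAtoms N ∪ atmsF l = as.toFinset)
    (hunkn : ctxUnkns N ∪ unknF l = Xs.toFinset) :
    renameT (swapsPerm (as'.zip as)) (listRen (Xs.zip Xs')) l =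
      permAct (swapsPerm (as'.zip as)) (subst (listSubst (swapsPerm (as'.zip as)) (Xs.zip Xs')) l) ∧
    ∀ (Γ' : Ctx) (θ : Subst), θ.FinDom →
      ((∀ p ∈ N, Fresh Γ' (swapsPerm (as'.zip as) p.1)
          (subst θ (.var FinPerm.id (listRen (Xs.zip Xs') p.2)))) ↔
       (∀ p ∈ N, Fresh Γ' p.1
          (subst θ (listSubst (swapsPerm (as'.zip as)) (Xs.zip Xs') p.2)))) := by
  set τ := swapsPerm (as'.zip as)
  have hτ : τ.inv = τ := FinPerm.inv_eq_self_of_mul_self (swapsPerm_zip_mul_self hnd)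
  have hς : ∀ X ∈ ctxUnkns N ∪ unknF l,
      listSubst τ (Xs.zip Xs') X = .var τ (listRen (Xs.zip Xs') X) := fun X hX =>
    listSubst_of_mem_map_fst τ (by
      rw [List.map_fst_zip hlenX.le, ← List.mem_toFinset, ← hunkn]; exact hX)
  refine ⟨renameT_eq_permAct_subst hτ fun X hX => hς X (Finset.mem_union_right _ hX),
    fun Γ' θ _ => forall₂_congr fun p hp => ?_⟩
  rw [hς p.2 (Finset.mem_union_left _ (Finset.mem_image_of_mem Prod.snd hp)), subst_var,
    subst_var, permAct_id, fresh_apply_iff_fresh_permAct_inv, hτ]
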